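/- arXiv:1309.3849 — 3 statements merged into one kernel-verified Lean document; each statement's English description precedes it below -/
import Mathlib

section
/- Let n ≥ 1, let r be a relation on Fin n, and let B be the n-by-n matrix over ℕ with B i j = 1 if i = j or r i j, and 0 otherwise. Define dist i j : ℕ∞ as the infimum of the lengths of walks from i to j (⊤ if none exists), and define Δ : ℕ∞ = ⨅ i, ⨆ j, dist i j (the 1-center value). Then for every ℓ : ℕ, Δ ≤ ℓ if and only if there exists a vertex i such that (B ^ ℓ) i j is positive for every vertex j. -/
/-- A walk of length `k` from `i` to `j` along the edge relation `r`. -/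
def IsWalk {n : ℕ} (r : Fin n → Fin n → Prop) (k : ℕ) (v : Fin (k + 1) → Fin n)
    (i j : Fin n) : Prop :=
  v 0 = i ∧ v (Fin.last k) = j ∧ ∀ t : Fin k, r (v t.castSucc) (v t.succ)

/-- The distance from `i` to `j`: the infimum of the lengths of walks from `i`
to `j`, with value `⊤` if no walk exists. -/
noncomputable def walkDist {n : ℕ} (r : Fin n → Fin n → Prop) (i j : Fin n) : ℕ∞ :=
  ⨅ (k : ℕ) (_ : ∃ v : Fin (k + 1) → Fin n, IsWalk r k v i j), (k : ℕ∞)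

lemma walk_snoc {n : ℕ} (s : Fin n → Fin n → Prop) {k : ℕ} {v : Fin (k+1) → Fin n}
    {i m j : Fin n} (h : IsWalk s k v i m) (hmj : s m j) :
    IsWalk s (k+1) (Fin.snoc v j) i j := by
  obtain ⟨h0, hl, he⟩ := h
  refine ⟨?_, ?_, ?_⟩
  · rw [show (0 : Fin (k+2)) = (0 : Fin (k+1)).castSucc from rfl, Fin.snoc_castSucc]; exact h0
  · simp
  · intro t
    induction t using Fin.lastCases with
    | last =>
      rw [Fin.succ_last, Fin.snoc_last, Fin.snoc_castSucc, hl]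
      exact hmj
    | cast u =>
      rw [Fin.succ_castSucc, Fin.snoc_castSucc, Fin.snoc_castSucc]
      exact he u

lemma walk_cons {n : ℕ} (s : Fin n → Fin n → Prop) (hs : ∀ a, s a a) {k : ℕ}
    {v : Fin (k+1) → Fin n} {i j : Fin n} (h : IsWalk s k v i j) :
    IsWalk s (k+1) (Fin.cons i v) i j := by
  obtain ⟨h0, hl, he⟩ := h
  refine ⟨rfl, ?_, ?_⟩
  · rw [show Fin.last (k+1) = (Fin.last k).succ from rfl, Fin.cons_succ]; exact hl
  · intro t
    induction t using Fin.cases with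
    | zero =>
      rw [Fin.castSucc_zero, Fin.cons_zero, Fin.cons_succ, h0]
      exact hs i
    | succ u =>
      rw [← Fin.succ_castSucc, Fin.cons_succ, Fin.cons_succ]
      exact he u

lemma walk_restrict {n : ℕ} (s : Fin n → Fin n → Prop) {k : ℕ} {v : Fin (k+1+1) → Fin n}
    {i j : Fin n} (h : IsWalk s (k+1) v i j) :
    IsWalk s k (v ∘ Fin.castSucc) i (v (Fin.last k).castSucc) ∧
      s (v (Fin.last k).castSucc) j := by
  obtain ⟨h0, hl, he⟩ := h
  refine ⟨⟨?_, rfl, fun t => ?_⟩, ?_⟩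
  · show v (Fin.castSucc 0) = i
    rw [Fin.castSucc_zero]; exact h0
  · show s (v t.castSucc.castSucc) (v t.succ.castSucc)
    rw [← Fin.succ_castSucc]
    exact he t.castSucc
  · have := he (Fin.last k)
    rwa [Fin.succ_last, hl] at this

lemma walk_mono {n : ℕ} {r s : Fin n → Fin n → Prop} (h : ∀ a b, r a b → s a b)
    {k : ℕ} {v : Fin (k+1) → Fin n} {i j : Fin n} (hw : IsWalk r k v i j) :
    IsWalk s k v i j :=
  ⟨hw.1, hw.2.1, fun t => h _ _ (hw.2.2 t)⟩

lemma walk_pad {n : ℕ} (s : Fin n → Fin n → Prop) (hs : ∀ a, s a a) :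
    ∀ k m : ℕ, m ≤ k → ∀ {i j : Fin n},
      (∃ v : Fin (m+1) → Fin n, IsWalk s m v i j) →
      ∃ v : Fin (k+1) → Fin n, IsWalk s k v i j := by
  intro k
  induction k with
  | zero =>
    intro m hm i j h
    interval_cases m
    exact h
  | succ k ih =>
    intro m hm i j h
    rcases eq_or_lt_of_le hm with heq | hlt
    · subst heq; exact h
    · obtain ⟨v, hv⟩ := ih m (by omega) h
      exact ⟨Fin.cons i v, walk_cons s hs hv⟩

lemma walk_strip {n : ℕ} (r : Fin n → Fin n → Prop) :
    ∀ k : ℕ, ∀ v : Fin (k+1) → Fin n, ∀ i j : Fin n,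
      IsWalk (fun a b => a = b ∨ r a b) k v i j →
      ∃ m, m ≤ k ∧ ∃ w : Fin (m+1) → Fin n, IsWalk r m w i j := by
  intro k
  induction k with
  | zero =>
    intro v i j h
    exact ⟨0, le_refl 0, v, h.1, h.2.1, fun t => t.elim0⟩
  | succ k ih =>
    intro v i j h
    obtain ⟨hw, hlast⟩ := walk_restrict _ h
    rcases hlast with heq | hr
    · obtain ⟨m, hm, w, hw'⟩ := ih _ _ _ (heq ▸ hw)
      exact ⟨m, by omega, w, hw'⟩
    · obtain ⟨m, hm, w, hw'⟩ := ih _ _ _ hw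
      exact ⟨m + 1, by omega, Fin.snoc w j, walk_snoc r hw' hr⟩

lemma pow_entry {n : ℕ} (r : Fin n → Fin n → Prop) [DecidableRel r]
    (B : Matrix (Fin n) (Fin n) ℕ)
    (hB : ∀ i j, B i j = if i = j ∨ r i j then 1 else 0) :
    ∀ k : ℕ, ∀ i j : Fin n, (B ^ k) i j ≠ 0 ↔
      ∃ v : Fin (k+1) → Fin n, IsWalk (fun a b => a = b ∨ r a b) k v i j := by
  intro k
  induction k with
  | zero =>
    intro i j
    simp only [pow_zero, Matrix.one_apply]
    constructor
    · intro h
      have hij : i = j := by by_contra hne; simp [hne] at h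
      exact ⟨fun _ => i, rfl, hij, fun t => t.elim0⟩
    · rintro ⟨v, h0, hl, -⟩
      have : i = j := by rw [← h0, ← hl]; rfl
      simp [this]
  | succ k ih =>
    intro i j
    rw [pow_succ, Matrix.mul_apply]
    constructor
    · intro h
      obtain ⟨m, -, hm⟩ := Finset.exists_ne_zero_of_sum_ne_zero h
      have h1 : (B ^ k) i m ≠ 0 := fun h' => hm (by simp [h'])
      have h2 : B m j ≠ 0 := fun h' => hm (by simp [h'])
      obtain ⟨v, hv⟩ := (ih i m).1 h1
      have hmj : m = j ∨ r m j := by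
        rw [hB] at h2; by_contra hc; simp [hc] at h2
      exact ⟨Fin.snoc v j, walk_snoc _ hv hmj⟩
    · rintro ⟨v, hv⟩
      obtain ⟨hw, hlast⟩ := walk_restrict _ hv
      set m := v (Fin.last k).castSucc with hm
      have h1 : (B ^ k) i m ≠ 0 := (ih i m).2 ⟨v ∘ Fin.castSucc, hw⟩
      have h2 : B m j ≠ 0 := by rw [hB]; simp [hlast]
      intro hsum
      rw [Finset.sum_eq_zero_iff] at hsum
      exact mul_ne_zero h1 h2 (hsum m (Finset.mem_univ m))

theorem stmt2 {n : ℕ} (hn : 1 ≤ n) (r : Fin n → Fin n → Prop) [DecidableRel r]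
    (B : Matrix (Fin n) (Fin n) ℕ)
    (hB : ∀ i j, B i j = if i = j ∨ r i j then 1 else 0)
    (ℓ : ℕ) :
    (⨅ i : Fin n, ⨆ j : Fin n, walkDist r i j) ≤ (ℓ : ℕ∞) ↔
      ∃ i : Fin n, ∀ j : Fin n, 0 < (B ^ ℓ) i j := by
  have hne : Nonempty (Fin n) := ⟨⟨0, hn⟩⟩
  have dist_iff : ∀ i j : Fin n, walkDist r i j ≤ (ℓ : ℕ∞) ↔
      ∃ m, m ≤ ℓ ∧ ∃ v : Fin (m+1) → Fin n, IsWalk r m v i j := by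
    intro i j
    constructor
    · intro h
      by_contra hc
      push_neg at hc
      have hge : ((ℓ + 1 : ℕ) : ℕ∞) ≤ walkDist r i j := by
        refine le_iInf fun k => le_iInf fun hk => ?_
        have hlt : ℓ < k := by
          by_contra h'
          obtain ⟨v, hv⟩ := hk
          exact hc k (le_of_not_gt h') v hv
        exact_mod_cast hlt
      have := le_trans hge h
      exact absurd (by exact_mod_cast this) (Nat.not_succ_le_self ℓ)
    · rintro ⟨m, hm, hv⟩
      calc walkDist r i j ≤ (m : ℕ∞) := iInf₂_le m hv
        _ ≤ (ℓ : ℕ∞) := by exact_mod_cast hm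
  have key : ∀ i j : Fin n, walkDist r i j ≤ (ℓ : ℕ∞) ↔ 0 < (B ^ ℓ) i j := by
    intro i j
    rw [dist_iff, Nat.pos_iff_ne_zero, pow_entry r B hB]
    constructor
    · rintro ⟨m, hm, hv⟩
      exact walk_pad _ (fun a => Or.inl rfl) ℓ m hm
        ⟨hv.choose, walk_mono (fun a b => Or.inr) hv.choose_spec⟩
    · rintro ⟨v, hv⟩
      exact walk_strip r ℓ v i j hv
  constructor
  · intro h
    obtain ⟨i, hi⟩ := Finite.exists_min (fun i : Fin n => ⨆ j, walkDist r i j)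
    have h1 : (⨆ j, walkDist r i j) ≤ (ℓ : ℕ∞) := le_trans (le_iInf hi) h
    exact ⟨i, fun j => (key i j).1 (le_trans (le_iSup _ j) h1)⟩
  · rintro ⟨i, hi⟩
    refine le_trans (iInf_le _ i) (iSup_le fun j => (key i j).2 (hi j))
end

section
/- Let n ≥ 1 and let A be an n-by-n matrix over the tropical semiring Tropical ℝ≥0∞. Then for every ℓ ≥ n - 1, (1 + A) ^ ℓ = (1 + A) ^ (n - 1). Consequently, the closure A* = ∑_{k ≥ 0} A ^ k equals the finite sum ∑_{k = 0}^{n - 1} A ^ k. -/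
open scoped ENNReal
open Tropical

namespace Stmt10Aux

variable {n : ℕ}

noncomputable def cost (W : Fin n → Fin n → ℝ≥0∞) : Fin n → List (Fin n) → Fin n → ℝ≥0∞
  | i, [], j => if i = j then 0 else ⊤
  | i, v :: l, j => W i v + cost W v l j

lemma cost_append' (W : Fin n → Fin n → ℝ≥0∞) (i v j : Fin n) (l₁ l₂ : List (Fin n)) :
    cost W i (l₁ ++ v :: l₂) j = cost W i (l₁ ++ [v]) v + cost W v l₂ j := by
  induction l₁ generalizing i with
  | nil => simp [cost, add_assoc]
  | cons a l ih => simp [cost, ih, add_assoc]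

lemma dup_decomp {α : Type*} {x : α} {l : List α} (h : l.Duplicate x) :
    ∃ s t u, l = s ++ x :: (t ++ x :: u) := by
  induction h with
  | cons_mem hm =>
      obtain ⟨t, u, rfl⟩ := List.append_of_mem hm
      exact ⟨[], t, u, rfl⟩
  | cons_duplicate _ ih =>
      obtain ⟨s, t, u, rfl⟩ := ih
      exact ⟨_ :: s, t, u, rfl⟩

lemma exists_shorter (W : Fin n → Fin n → ℝ≥0∞) (i j : Fin n) (l : List (Fin n))
    (hl : l.length = n) : ∃ l', l'.length < n ∧ cost W i l' j ≤ cost W i l j := by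
  have hnd : ¬ (i :: l).Nodup := by
    intro h
    have := h.length_le_card
    simp [hl] at this
  obtain ⟨x, hx⟩ := List.exists_duplicate_iff_not_nodup.2 hnd
  obtain ⟨s, t, u, hdec⟩ := dup_decomp hx
  match s, hdec with
  | [], hdec =>
      obtain ⟨rfl, rfl⟩ := List.cons.inj hdec
      refine ⟨u, ?_, ?_⟩
      · simp at hl; omega
      · rw [cost_append']
        exact le_add_self
  | a :: s', hdec =>
      rw [List.cons_append] at hdec
      obtain ⟨rfl, rfl⟩ := List.cons.inj hdec
      refine ⟨s' ++ x :: u, ?_, ?_⟩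
      · simp at hl ⊢; omega
      · rw [cost_append' W i x j s' (t ++ x :: u), cost_append' W i x j s' u,
          cost_append' W x x j t u]
        exact add_le_add (le_refl _) le_add_self

variable (A : Matrix (Fin n) (Fin n) (Tropical ℝ≥0∞))

noncomputable def W : Fin n → Fin n → ℝ≥0∞ := fun a b => untrop (A a b)

lemma pow_entry (k : ℕ) (i j : Fin n) :
    untrop ((A ^ k) i j) = ⨅ (l : List (Fin n)) (_ : l.length = k), cost (W A) i l j := by
  induction k generalizing i with
  | zero =>
      rw [pow_zero, Matrix.one_apply]
      apply le_antisymm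
      · refine le_iInf₂ fun l hl => ?_
        obtain rfl : l = [] := List.length_eq_zero_iff.1 hl
        split <;> simp [cost, *]
      · refine le_trans (iInf₂_le
          (f := fun (l : List (Fin n)) (_ : l.length = 0) => cost (W A) i l j) [] rfl) ?_
        split <;> simp [cost, *]
  | succ k ih =>
      have hs : untrop (∑ v, A i v * (A ^ k) v j) = ⨅ v, untrop (A i v * (A ^ k) v j) :=
        untrop_sum (R := NNReal) _
      rw [pow_succ', Matrix.mul_apply, hs]
      simp_rw [untrop_mul, ih]
      apply le_antisymm
      · refine le_iInf₂ fun l hl => ?_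
        match l with
        | v :: l' =>
            refine le_trans (iInf_le _ v) ?_
            rw [ENNReal.add_iInf]
            refine le_trans (iInf_le _ l') ?_
            rw [ENNReal.add_iInf]
            refine le_trans (iInf_le _ (show l'.length = k by simpa using hl)) ?_
            exact le_of_eq (by simp [cost, W])
      · refine le_iInf fun v => ?_
        rw [ENNReal.add_iInf]
        refine le_iInf fun l' => ?_
        rw [ENNReal.add_iInf]
        refine le_iInf fun hl' => ?_
        refine le_trans (iInf₂_le (v :: l') (by simp [hl'])) ?_
        exact le_of_eq (by simp [cost, W])

lemma absorb :
    A ^ n + ∑ k ∈ Finset.range n, A ^ k = ∑ k ∈ Finset.range n, A ^ k := by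
  ext i j
  rw [Matrix.add_apply]
  apply Tropical.add_eq_right
  rw [← Tropical.untrop_le_iff]
  rw [Matrix.sum_apply, Finset.untrop_sum', pow_entry]
  refine le_iInf₂ fun l hl => ?_
  obtain ⟨l', hl', hle⟩ := exists_shorter (W A) i j l hl
  refine le_trans ?_ hle
  refine le_trans (Finset.inf_le (Finset.mem_range.2 hl')) ?_
  simp only [Function.comp_apply, pow_entry]
  exact iInf₂_le (f := fun (m : List (Fin n)) (_ : m.length = l'.length) => cost (W A) i m j) l' rfl

lemma idem (X : Matrix (Fin n) (Fin n) (Tropical ℝ≥0∞)) : X + X = X := by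
  ext i j
  rw [Matrix.add_apply, Tropical.add_self]

lemma geom (m : ℕ) : (1 + A) ^ m = ∑ k ∈ Finset.range (m + 1), A ^ k := by
  induction m with
  | zero => simp
  | succ m ih =>
      rw [pow_succ, ih, mul_add, mul_one, Finset.sum_mul]
      simp_rw [← pow_succ]
      rw [Finset.sum_range_succ' (fun k => A ^ k) (m + 1),
        Finset.sum_range_succ' (fun k => A ^ k) m,
        Finset.sum_range_succ (fun k => A ^ (k + 1)) m,
        pow_zero, add_add_add_comm, idem, add_assoc, add_comm (A ^ (m + 1)) 1]

end Stmt10Aux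

open Stmt10Aux in
theorem stmt10 {n : ℕ} (hn : 1 ≤ n)
    (A : Matrix (Fin n) (Fin n) (Tropical ℝ≥0∞)) :
    (∀ ℓ : ℕ, n - 1 ≤ ℓ → (1 + A) ^ ℓ = (1 + A) ^ (n - 1)) ∧
    ∀ i j : Fin n,
      Tropical.trop (⨅ k : ℕ, Tropical.untrop ((A ^ k) i j)) =
        (∑ k ∈ Finset.range n, A ^ k) i j := by
  have h1 : n - 1 + 1 = n := Nat.succ_pred_eq_of_pos hn
  have hpow : (1 + A) ^ n = (1 + A) ^ (n - 1) := by
    rw [geom A n, geom A (n - 1), h1, Finset.sum_range_succ, add_comm]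
    exact absorb A
  have hstab : ∀ ℓ : ℕ, n - 1 ≤ ℓ → (1 + A) ^ ℓ = (1 + A) ^ (n - 1) := by
    intro ℓ hℓ
    induction ℓ, hℓ using Nat.le_induction with
    | base => rfl
    | succ ℓ hℓ ih =>
        rw [pow_succ, ih, ← pow_succ, h1, hpow]
  refine ⟨hstab, fun i j => ?_⟩
  have hS : untrop ((∑ k ∈ Finset.range n, A ^ k) i j)
      = (Finset.range n).inf (fun m => untrop ((A ^ m) i j)) := by
    rw [Matrix.sum_apply, Finset.untrop_sum']
    rfl
  have hmin : ∀ k : ℕ, (Finset.range n).inf (fun m => untrop ((A ^ m) i j))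
      ≤ untrop ((A ^ k) i j) := by
    intro k
    have h2 : ∑ m ∈ Finset.range (max k (n - 1) + 1), A ^ m = ∑ m ∈ Finset.range n, A ^ m := by
      rw [← geom A, hstab _ (le_max_right _ _), geom A, h1]
    have h3 : (Finset.range (max k (n - 1) + 1)).inf (fun m => untrop ((A ^ m) i j))
        = (Finset.range n).inf (fun m => untrop ((A ^ m) i j)) := by
      have := congrArg (fun M : Matrix (Fin n) (Fin n) (Tropical ℝ≥0∞) => untrop (M i j)) h2
      simpa only [Matrix.sum_apply, Finset.untrop_sum', Function.comp_def] using this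
    rw [← h3]
    exact Finset.inf_le (Finset.mem_range.2 (by omega))
  have hinf : ⨅ k : ℕ, untrop ((A ^ k) i j)
      = (Finset.range n).inf (fun m => untrop ((A ^ m) i j)) := by
    apply le_antisymm
    · exact Finset.le_inf fun m _ => iInf_le _ m
    · exact le_iInf hmin
  rw [hinf, ← hS, Tropical.trop_untrop]
end

section
/- Let x and y be finite merit-antichains of pairs in ℝ≥0 × ℝ≥0, and let P = {(d + d', min f f') : (d, f) ∈ x, (d', f') ∈ y}. Then the set of merit-maximal elements of P is a merit-antichain of cardinality at most |x| + |y|. -/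
open scoped NNReal

/-- The merit order on df-pairs: `(d, f) ≥ₘ (d', f')` iff `d ≤ d'` and `f ≥ f'`. -/
def MeritGE (p q : ℝ≥0 × ℝ≥0) : Prop := p.1 ≤ q.1 ∧ q.2 ≤ p.2

/-- A merit-antichain: a set of df-pairs in which no two distinct elements are
comparable under the merit order. -/
def IsMeritAntichain (S : Set (ℝ≥0 × ℝ≥0)) : Prop :=
  ∀ p ∈ S, ∀ q ∈ S, p ≠ q → ¬ MeritGE p q

/-- The set of products of df-pairs:
`{(d + d', min f f') : (d, f) ∈ x, (d', f') ∈ y}`. -/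
def dfProdSet (x y : Set (ℝ≥0 × ℝ≥0)) : Set (ℝ≥0 × ℝ≥0) :=
  {p | ∃ a ∈ x, ∃ b ∈ y, p = (a.1 + b.1, min a.2 b.2)}

/-- The merit-maximal elements of a set of df-pairs: those elements such that
no element of the set is strictly greater in the merit order. -/
def meritMaximals (P : Set (ℝ≥0 × ℝ≥0)) : Set (ℝ≥0 × ℝ≥0) :=
  {p ∈ P | ∀ q ∈ P, MeritGE q p → q = p}

theorem stmt15 (x y : Set (ℝ≥0 × ℝ≥0)) (hx : x.Finite) (hy : y.Finite)
    (hxa : IsMeritAntichain x) (hya : IsMeritAntichain y) :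
    IsMeritAntichain (meritMaximals (dfProdSet x y)) ∧
      (meritMaximals (dfProdSet x y)).Finite ∧
      (meritMaximals (dfProdSet x y)).ncard ≤ x.ncard + y.ncard := by
  classical
  set P := dfProdSet x y with hP
  set M := meritMaximals P with hM
  -- P is finite
  have hPfin : P.Finite := by
    have : P ⊆ (fun ab : (ℝ≥0 × ℝ≥0) × (ℝ≥0 × ℝ≥0) =>
        (ab.1.1 + ab.2.1, min ab.1.2 ab.2.2)) '' (x ×ˢ y) := by
      rintro p ⟨a, ha, b, hb, rfl⟩
      exact ⟨(a, b), ⟨ha, hb⟩, rfl⟩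
    exact ((hx.prod hy).image _).subset this
  have hMsub : M ⊆ P := fun p hp => hp.1
  have hMfin : M.Finite := hPfin.subset hMsub
  -- antichain
  have hanti : IsMeritAntichain M := by
    intro p hp q hq hne hge
    exact hne (hq.2 p hp.1 hge)
  refine ⟨hanti, hMfin, ?_⟩
  -- snd is injective on M
  have hinj : Set.InjOn Prod.snd M := by
    intro p hp q hq h2
    rcases le_total p.1 q.1 with h1 | h1
    · exact (hq.2 p hp.1 ⟨h1, h2.ge⟩)
    · exact (hp.2 q hq.1 ⟨h1, h2.le⟩).symm
  have himg : Prod.snd '' M ⊆ Prod.snd '' x ∪ Prod.snd '' y := by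
    rintro f ⟨p, hp, rfl⟩
    obtain ⟨a, ha, b, hb, rfl⟩ := hMsub hp
    rcases min_cases a.2 b.2 with ⟨h, _⟩ | ⟨h, _⟩
    · exact Or.inl ⟨a, ha, h.symm⟩
    · exact Or.inr ⟨b, hb, h.symm⟩
  calc M.ncard = (Prod.snd '' M).ncard := (Set.ncard_image_of_injOn hinj).symm
    _ ≤ (Prod.snd '' x ∪ Prod.snd '' y).ncard :=
        Set.ncard_le_ncard himg ((hx.image _).union (hy.image _))
    _ ≤ (Prod.snd '' x).ncard + (Prod.snd '' y).ncard := Set.ncard_union_le _ _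
    _ ≤ x.ncard + y.ncard :=
        Nat.add_le_add (Set.ncard_image_le hx) (Set.ncard_image_le hy)
end
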